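/- arXiv:0705.3632 — 2 statements merged into one kernel-verified Lean document; each statement's English description precedes it below -/
import Mathlib

section
/- Over a field K of characteristic p > 0, the set 1 + X·K[[X]] with the shuffle product is an abelian group in which every element has order dividing p; in particular it is an elementary abelian p-group (an F_p-vector space). -/
open PowerSeries

/-- The shuffle product of two formal power series in one variable:
`A ⧢ B = Σ_{n,m} C(n+m,n) αₙ βₘ X^{n+m}`. -/
noncomputable def shuffle {K : Type*} [Field K] (A B : PowerSeries K) : PowerSeries K :=
  PowerSeries.mk fun n =>
    ∑ p ∈ Finset.HasAntidiagonal.antidiagonal n,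
      (n.choose p.1 : K) * (PowerSeries.coeff p.1 A) * (PowerSeries.coeff p.2 B)
/-- `shufflePow A n` is the `n`-fold shuffle power `A^{⧢n}`. -/
noncomputable def shufflePow {K : Type*} [Field K] (A : PowerSeries K) : ℕ → PowerSeries K
  | 0 => 1
  | n + 1 => shuffle A (shufflePow A n)

namespace ShuffleAux

open Finset

variable {K : Type*} [Field K]

lemma coeff_shuffle (A B : PowerSeries K) (n : ℕ) :
    PowerSeries.coeff n (shuffle A B) =
      ∑ p ∈ Finset.HasAntidiagonal.antidiagonal n,
        (n.choose p.1 : K) * (PowerSeries.coeff p.1 A) * (PowerSeries.coeff p.2 B) := by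
  simp [shuffle]

lemma coeff_shuffle' (A B : PowerSeries K) (n : ℕ) :
    PowerSeries.coeff n (shuffle A B) =
      ∑ i ∈ Finset.range (n + 1),
        (n.choose i : K) * (PowerSeries.coeff i A) * (PowerSeries.coeff (n - i) B) := by
  rw [coeff_shuffle, Finset.Nat.sum_antidiagonal_eq_sum_range_succ_mk]

lemma coeff_zero_shuffle (A B : PowerSeries K) :
    PowerSeries.coeff 0 (shuffle A B) =
      PowerSeries.coeff 0 A * PowerSeries.coeff 0 B := by
  simp [coeff_shuffle']

lemma shuffle_one (A : PowerSeries K) : shuffle A 1 = A := by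
  ext n
  rw [coeff_shuffle]
  rw [Finset.sum_eq_single (n, 0)]
  · simp [PowerSeries.coeff_one]
  · rintro ⟨i, j⟩ hmem hne
    simp only [Finset.HasAntidiagonal.mem_antidiagonal] at hmem
    have hj : j ≠ 0 := by
      rintro rfl
      exact hne (by simp; omega)
    simp [PowerSeries.coeff_one, hj]
  · intro h; exact absurd (by simp [Finset.mem_antidiagonal]) h

lemma shuffle_comm (A B : PowerSeries K) : shuffle A B = shuffle B A := by
  ext n
  rw [coeff_shuffle, coeff_shuffle]
  apply Finset.sum_nbij' (i := Prod.swap) (j := Prod.swap)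
  · intro p hp; simpa [Finset.mem_antidiagonal, add_comm] using hp
  · intro p hp; simpa [Finset.mem_antidiagonal, add_comm] using hp
  · intro p _; simp
  · intro p _; simp
  · rintro ⟨i, j⟩ hp
    simp only [Finset.HasAntidiagonal.mem_antidiagonal] at hp
    have : n.choose i = n.choose j := Nat.choose_symm_of_eq_add hp.symm
    simp only [Prod.swap_prod_mk, this]
    ring

lemma one_shuffle (A : PowerSeries K) : shuffle 1 A = A := by
  rw [shuffle_comm, shuffle_one]

lemma sum_aux {M : Type*} [AddCommMonoid M] (n : ℕ) (f : ℕ → ℕ → ℕ → M) :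
    ∑ s ∈ Finset.range (n + 1), ∑ i ∈ Finset.range (s + 1), f i (s - i) (n - s)
      = ∑ i ∈ Finset.range (n + 1), ∑ j ∈ Finset.range (n - i + 1), f i j (n - i - j) := by
  rw [Finset.sum_sigma', Finset.sum_sigma']
  apply Finset.sum_nbij' (i := fun x => (⟨x.2, x.1 - x.2⟩ : Σ _ : ℕ, ℕ) )
    (j := fun x => (⟨x.1 + x.2, x.1⟩ : Σ _ : ℕ, ℕ))
  · rintro ⟨s, i⟩ h
    simp only [Finset.mem_sigma, Finset.mem_range] at h ⊢
    omega
  · rintro ⟨i, j⟩ h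
    simp only [Finset.mem_sigma, Finset.mem_range] at h ⊢
    omega
  · rintro ⟨s, i⟩ h
    simp only [Finset.mem_sigma, Finset.mem_range] at h
    show (⟨i + (s - i), i⟩ : Σ _ : ℕ, ℕ) = ⟨s, i⟩
    have hs : i + (s - i) = s := by omega
    rw [hs]
  · rintro ⟨i, j⟩ h
    simp only [Finset.mem_sigma, Finset.mem_range] at h
    show (⟨i, i + j - i⟩ : Σ _ : ℕ, ℕ) = ⟨i, j⟩
    have hj : i + j - i = j := by omega
    rw [hj]
  · rintro ⟨s, i⟩ h
    simp only [Finset.mem_sigma, Finset.mem_range] at h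
    have h2 : n - i - (s - i) = n - s := by omega
    show f i (s - i) (n - s) = f i (s - i) (n - i - (s - i))
    rw [h2]

lemma shuffle_assoc (A B C : PowerSeries K) :
    shuffle (shuffle A B) C = shuffle A (shuffle B C) := by
  ext n
  rw [coeff_shuffle', coeff_shuffle']
  have L : ∑ s ∈ Finset.range (n + 1),
      (n.choose s : K) * (PowerSeries.coeff s (shuffle A B)) * (PowerSeries.coeff (n - s) C)
      = ∑ s ∈ Finset.range (n + 1), ∑ i ∈ Finset.range (s + 1),
          ((n.choose s : K) * (s.choose i : K)) * (PowerSeries.coeff i A)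
            * (PowerSeries.coeff (s - i) B) * (PowerSeries.coeff (n - s) C) := by
    apply Finset.sum_congr rfl
    intro s _
    rw [coeff_shuffle', Finset.mul_sum, Finset.sum_mul]
    apply Finset.sum_congr rfl
    intro i _
    ring
  have R : ∑ i ∈ Finset.range (n + 1),
      (n.choose i : K) * (PowerSeries.coeff i A) * (PowerSeries.coeff (n - i) (shuffle B C))
      = ∑ i ∈ Finset.range (n + 1), ∑ j ∈ Finset.range (n - i + 1),
          ((n.choose i : K) * ((n - i).choose j : K)) * (PowerSeries.coeff i A)
            * (PowerSeries.coeff j B) * (PowerSeries.coeff (n - i - j) C) := by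
    apply Finset.sum_congr rfl
    intro i _
    rw [coeff_shuffle', Finset.mul_sum]
    apply Finset.sum_congr rfl
    intro j _
    ring
  rw [L, R]
  have key : ∑ s ∈ Finset.range (n + 1), ∑ i ∈ Finset.range (s + 1),
      ((n.choose s : K) * (s.choose i : K)) * (PowerSeries.coeff i A)
        * (PowerSeries.coeff (s - i) B) * (PowerSeries.coeff (n - s) C)
      = ∑ s ∈ Finset.range (n + 1), ∑ i ∈ Finset.range (s + 1),
          (fun i j k => ((n.choose (i + j) : K) * ((i + j).choose i : K))
            * (PowerSeries.coeff i A) * (PowerSeries.coeff j B)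
            * (PowerSeries.coeff k C)) i (s - i) (n - s) := by
    apply Finset.sum_congr rfl
    intro s hs
    apply Finset.sum_congr rfl
    intro i hi
    simp only [Finset.mem_range] at hs hi
    have h1 : i + (s - i) = s := by omega
    simp only [h1]
  refine key.trans ((sum_aux n (fun i j k => ((n.choose (i + j) : K) * ((i + j).choose i : K))
    * (PowerSeries.coeff i A) * (PowerSeries.coeff j B)
    * (PowerSeries.coeff k C))).trans ?_)
  apply Finset.sum_congr rfl
  intro i hi
  apply Finset.sum_congr rfl
  intro j hj
  simp only [Finset.mem_range] at hi hj
  have hc : n.choose (i + j) * (i + j).choose i = n.choose i * (n - i).choose j := by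
    rw [Nat.choose_mul (by omega : i ≤ i + j),
      Nat.add_sub_cancel_left]
  show ((n.choose (i + j) : K) * ((i + j).choose i : K)) * (PowerSeries.coeff i A)
      * (PowerSeries.coeff j B) * (PowerSeries.coeff (n - i - j) C) = _
  rw [← Nat.cast_mul, hc, Nat.cast_mul]

lemma shuffle_add (A B C : PowerSeries K) :
    shuffle A (B + C) = shuffle A B + shuffle A C := by
  ext n
  simp only [map_add, coeff_shuffle, mul_add, Finset.sum_add_distrib]

lemma shuffle_nsmul (A B : PowerSeries K) (m : ℕ) :
    shuffle A (m • B) = m • shuffle A B := by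
  ext n
  rw [map_nsmul, coeff_shuffle, coeff_shuffle, Finset.smul_sum]
  apply Finset.sum_congr rfl
  intro p _
  rw [map_nsmul]
  simp only [nsmul_eq_mul]
  ring

/-- The shift operator, a derivation for the shuffle product. -/
noncomputable def D (A : PowerSeries K) : PowerSeries K :=
  PowerSeries.mk fun n => PowerSeries.coeff (n + 1) A

lemma coeff_D (A : PowerSeries K) (n : ℕ) :
    PowerSeries.coeff n (D A) = PowerSeries.coeff (n + 1) A := by
  simp [D]

lemma D_shuffle (A B : PowerSeries K) :
    D (shuffle A B) = shuffle (D A) B + shuffle A (D B) := by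
  ext n
  rw [map_add, coeff_D, coeff_shuffle', coeff_shuffle', coeff_shuffle']
  have hL : ∑ i ∈ Finset.range (n + 1 + 1),
      ((n + 1).choose i : K) * (PowerSeries.coeff i A) * (PowerSeries.coeff (n + 1 - i) B)
      = (∑ i ∈ Finset.range (n + 1),
          ((n + 1).choose (i + 1) : K) * (PowerSeries.coeff (i + 1) A)
            * (PowerSeries.coeff (n - i) B))
        + (PowerSeries.coeff 0 A) * (PowerSeries.coeff (n + 1) B) := by
    rw [Finset.sum_range_succ']
    simp only [Nat.choose_zero_right, Nat.cast_one, one_mul, Nat.sub_zero]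
    congr 1
    apply Finset.sum_congr rfl
    intro i hi
    simp only [Finset.mem_range] at hi
    have : n + 1 - (i + 1) = n - i := by omega
    rw [this]
  rw [hL]
  have hP : ∀ i ∈ Finset.range (n + 1),
      ((n + 1).choose (i + 1) : K) * (PowerSeries.coeff (i + 1) A)
        * (PowerSeries.coeff (n - i) B)
      = (n.choose i : K) * (PowerSeries.coeff (i + 1) A) * (PowerSeries.coeff (n - i) B)
        + (n.choose (i + 1) : K) * (PowerSeries.coeff (i + 1) A)
          * (PowerSeries.coeff (n - i) B) := by
    intro i _
    rw [Nat.choose_succ_succ]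
    push_cast
    ring
  rw [Finset.sum_congr rfl hP, Finset.sum_add_distrib]
  have h1 : ∑ i ∈ Finset.range (n + 1),
      (n.choose i : K) * (PowerSeries.coeff (i + 1) A) * (PowerSeries.coeff (n - i) B)
      = ∑ i ∈ Finset.range (n + 1),
          (n.choose i : K) * (PowerSeries.coeff i (D A)) * (PowerSeries.coeff (n - i) B) := by
    apply Finset.sum_congr rfl
    intro i _
    rw [coeff_D]
  have h2 : (∑ i ∈ Finset.range (n + 1),
      (n.choose (i + 1) : K) * (PowerSeries.coeff (i + 1) A) * (PowerSeries.coeff (n - i) B))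
      + (PowerSeries.coeff 0 A) * (PowerSeries.coeff (n + 1) B)
      = ∑ i ∈ Finset.range (n + 1),
          (n.choose i : K) * (PowerSeries.coeff i A) * (PowerSeries.coeff (n - i) (D B)) := by
    conv_rhs => rw [Finset.sum_range_succ']
    rw [Finset.sum_range_succ]
    simp only [Nat.choose_succ_self, Nat.cast_zero, zero_mul, add_zero,
      Nat.choose_zero_right, Nat.cast_one, one_mul, Nat.sub_zero]
    congr 1
    · apply Finset.sum_congr rfl
      intro i hi
      simp only [Finset.mem_range] at hi
      rw [coeff_D]
      have : n - (i + 1) + 1 = n - i := by omega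
      rw [this]
    · rw [coeff_D]
  rw [h1]
  rw [add_assoc, h2]

lemma D_one : D (1 : PowerSeries K) = 0 := by
  ext n
  rw [coeff_D, PowerSeries.coeff_one]
  simp

lemma D_shufflePow (A : PowerSeries K) (k : ℕ) :
    D (shufflePow A (k + 1)) = (k + 1) • shuffle (shufflePow A k) (D A) := by
  induction k with
  | zero =>
    show D (shuffle A (shufflePow A 0)) = _
    show D (shuffle A 1) = 1 • shuffle 1 (D A)
    rw [shuffle_one, one_shuffle, one_smul]
  | succ k ih =>
    show D (shuffle A (shufflePow A (k + 1))) = _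
    rw [D_shuffle, ih, shuffle_nsmul, shuffle_comm (D A)]
    have : shuffle A (shuffle (shufflePow A k) (D A))
        = shuffle (shufflePow A (k + 1)) (D A) := by
      rw [← shuffle_assoc]
      rfl
    rw [this]
    conv_rhs => rw [succ_nsmul]
    rw [add_comm]

lemma coeff_zero_shufflePow (A : PowerSeries K) (m : ℕ) :
    PowerSeries.coeff 0 (shufflePow A m) = (PowerSeries.coeff 0 A) ^ m := by
  induction m with
  | zero => simp [shufflePow, PowerSeries.coeff_one]
  | succ m ih =>
    show PowerSeries.coeff 0 (shuffle A (shufflePow A m)) = _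
    rw [coeff_zero_shuffle, ih, pow_succ]
    ring

end ShuffleAux

/-- Over a field of characteristic `p > 0`, the set `1 + X·K[[X]]` with the shuffle
product is an abelian group in which every element has order dividing `p`:
it is closed under `⧢`, has unit `1`, is commutative and associative, every
element has an inverse, and the `p`-th shuffle power of every element is `1`
(so it is an elementary abelian `p`-group, i.e. an `𝔽_p`-vector space). -/
theorem shuffle_group_elementary_abelian {K : Type*} [Field K] (p : ℕ) (hp : p.Prime)
    [CharP K p] :
    (∀ A B : PowerSeries K, PowerSeries.coeff 0 A = 1 → PowerSeries.coeff 0 B = 1 →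
      PowerSeries.coeff 0 (shuffle A B) = 1) ∧
    (PowerSeries.coeff 0 (1 : PowerSeries K) = 1) ∧
    (∀ A : PowerSeries K, shuffle A 1 = A) ∧
    (∀ A B : PowerSeries K, shuffle A B = shuffle B A) ∧
    (∀ A B C : PowerSeries K, shuffle (shuffle A B) C = shuffle A (shuffle B C)) ∧
    (∀ A : PowerSeries K, PowerSeries.coeff 0 A = 1 →
      ∃ B : PowerSeries K, PowerSeries.coeff 0 B = 1 ∧ shuffle A B = 1) ∧
    (∀ A : PowerSeries K, PowerSeries.coeff 0 A = 1 → shufflePow A p = 1) := by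
  have hpow : ∀ A : PowerSeries K, PowerSeries.coeff 0 A = 1 → shufflePow A p = 1 := by
    intro A hA
    obtain ⟨q, hq⟩ : ∃ q, p = q + 1 := ⟨p - 1, (Nat.succ_pred_eq_of_pos hp.pos).symm⟩
    have hD : ShuffleAux.D (shufflePow A p) = 0 := by
      rw [hq, ShuffleAux.D_shufflePow, ← hq]
      ext n
      rw [map_nsmul]
      have : (p : K) = 0 := CharP.cast_eq_zero K p
      rw [nsmul_eq_mul, this, zero_mul, map_zero]
    ext n
    cases n with
    | zero =>
      rw [ShuffleAux.coeff_zero_shufflePow, hA, one_pow]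
      simp [PowerSeries.coeff_one]
    | succ n =>
      have := congrArg (PowerSeries.coeff n) hD
      rw [ShuffleAux.coeff_D, map_zero] at this
      rw [this, PowerSeries.coeff_one]
      simp
  refine ⟨?_, ?_, ShuffleAux.shuffle_one, ShuffleAux.shuffle_comm, ShuffleAux.shuffle_assoc,
    ?_, hpow⟩
  · intro A B hA hB
    rw [ShuffleAux.coeff_zero_shuffle, hA, hB, one_mul]
  · simp [PowerSeries.coeff_one]
  · intro A hA
    obtain ⟨q, hq⟩ : ∃ q, p = q + 1 := ⟨p - 1, (Nat.succ_pred_eq_of_pos hp.pos).symm⟩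
    refine ⟨shufflePow A q, ?_, ?_⟩
    · rw [ShuffleAux.coeff_zero_shufflePow, hA, one_pow]
    · have : shuffle A (shufflePow A q) = shufflePow A p := by rw [hq]; rfl
      rw [this, hpow A hA]
end

section
/- Every finite orbit of σ acting on 1 + X·F̄₂[[X]] has cardinality a power of 2. -/
open PowerSeries
open scoped Classical

/-- The quadratic form
`σ(Σ αₙXⁿ) = α₀² + Σ_{n≥0} α_{2ⁿ}² X^{2^{n+1}} + Σ_{0≤i<j} C(i+j,i) αᵢαⱼ X^{i+j}`. -/
noncomputable def sigmaForm {K : Type*} [Field K] (A : PowerSeries K) : PowerSeries K :=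
  PowerSeries.mk fun m =>
    (if m = 0 then (PowerSeries.coeff (R := K) 0 A) ^ 2 else 0) +
    (if ∃ n : ℕ, m = 2 ^ (n + 1) then (PowerSeries.coeff (R := K) (m / 2) A) ^ 2 else 0) +
    ∑ p ∈ Finset.HasAntidiagonal.antidiagonal m,
      (if p.1 < p.2 then
        (m.choose p.1 : K) * PowerSeries.coeff (R := K) p.1 A * PowerSeries.coeff (R := K) p.2 A
      else 0)

variable {K : Type*} [Field K]

lemma coeff_sigmaForm (A : PowerSeries K) (m : ℕ) :
    PowerSeries.coeff (R := K) m (sigmaForm A) =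
    (if m = 0 then (PowerSeries.coeff (R := K) 0 A) ^ 2 else 0) +
    (if ∃ n : ℕ, m = 2 ^ (n + 1) then (PowerSeries.coeff (R := K) (m / 2) A) ^ 2 else 0) +
    ∑ p ∈ Finset.HasAntidiagonal.antidiagonal m,
      (if p.1 < p.2 then
        (m.choose p.1 : K) * PowerSeries.coeff (R := K) p.1 A * PowerSeries.coeff (R := K) p.2 A
      else 0) := by
  simp [sigmaForm]

lemma coeff_zero_sigmaForm (A : PowerSeries K) :
    PowerSeries.coeff (R := K) 0 (sigmaForm A) = (PowerSeries.coeff (R := K) 0 A) ^ 2 := by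
  rw [coeff_sigmaForm]
  have h1 : ¬ ∃ n : ℕ, 0 = 2 ^ (n + 1) := by
    rintro ⟨n, hn⟩; exact absurd hn.symm (pow_ne_zero _ two_ne_zero)
  simp [h1, Finset.Nat.antidiagonal_zero]

lemma coeff_zero_iterate (A : PowerSeries K) (hA : PowerSeries.coeff (R := K) 0 A = 1) (j : ℕ) :
    PowerSeries.coeff (R := K) 0 (sigmaForm^[j] A) = 1 := by
  induction j with
  | zero => rw [Function.iterate_zero, id]; exact hA
  | succ j ih => rw [Function.iterate_succ_apply', coeff_zero_sigmaForm, ih, one_pow]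

lemma coeff_sigmaForm_congr {B C : PowerSeries K} {M : ℕ}
    (h : ∀ m < M, PowerSeries.coeff (R := K) m B = PowerSeries.coeff (R := K) m C)
    {m : ℕ} (hm : m < M) :
    PowerSeries.coeff (R := K) m (sigmaForm B) = PowerSeries.coeff (R := K) m (sigmaForm C) := by
  rw [coeff_sigmaForm, coeff_sigmaForm]
  have h0 : ∀ p ∈ Finset.HasAntidiagonal.antidiagonal m,
      (if p.1 < p.2 then (m.choose p.1 : K) * PowerSeries.coeff (R := K) p.1 B * PowerSeries.coeff (R := K) p.2 B else 0) =
      (if p.1 < p.2 then (m.choose p.1 : K) * PowerSeries.coeff (R := K) p.1 C * PowerSeries.coeff (R := K) p.2 C else 0) := by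
    intro p hp
    rw [Finset.HasAntidiagonal.mem_antidiagonal] at hp
    have h1 : p.1 < M := lt_of_le_of_lt (hp ▸ Nat.le_add_right _ _) hm
    have h2 : p.2 < M := lt_of_le_of_lt (hp ▸ Nat.le_add_left _ _) hm
    rw [h p.1 h1, h p.2 h2]
  rw [Finset.sum_congr rfl h0]
  congr 2
  · split_ifs with h'
    · subst h'; rw [h 0 hm]
    · rfl
  · split_ifs with h'
    · rw [h (m / 2) (lt_of_le_of_lt (Nat.div_le_self m 2) hm)]
    · rfl

lemma coeff_sigmaForm_sub {B C : PowerSeries K} {M : ℕ} (hM : 1 ≤ M)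
    (h : ∀ m < M, PowerSeries.coeff (R := K) m B = PowerSeries.coeff (R := K) m C) :
    PowerSeries.coeff (R := K) M (sigmaForm B) - PowerSeries.coeff (R := K) M (sigmaForm C)
      = PowerSeries.coeff (R := K) 0 B * (PowerSeries.coeff (R := K) M B - PowerSeries.coeff (R := K) M C) := by
  rw [coeff_sigmaForm, coeff_sigmaForm]
  have hM0 : M ≠ 0 := by omega
  have hdiv : M / 2 < M := Nat.div_lt_self (by omega) one_lt_two
  have hsq : (if ∃ n : ℕ, M = 2 ^ (n + 1) then (PowerSeries.coeff (R := K) (M / 2) B) ^ 2 else 0)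
      = (if ∃ n : ℕ, M = 2 ^ (n + 1) then (PowerSeries.coeff (R := K) (M / 2) C) ^ 2 else 0) := by
    split_ifs with h'
    · rw [h (M / 2) hdiv]
    · rfl
  rw [if_neg hM0, if_neg hM0, hsq]
  simp only [zero_add]
  rw [add_sub_add_left_eq_sub, ← Finset.sum_sub_distrib]
  have hmem : (0, M) ∈ Finset.HasAntidiagonal.antidiagonal M := by simp
  rw [Finset.sum_eq_single_of_mem (0, M) hmem]
  · rw [if_pos (by omega : (0:ℕ) < M), if_pos (by omega : (0:ℕ) < M)]
    have := h 0 (by omega)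
    simp only [Nat.choose_zero_right, Nat.cast_one, one_mul]
    rw [this]
    ring
  · rintro ⟨i, j⟩ hp hne
    rw [Finset.HasAntidiagonal.mem_antidiagonal] at hp
    simp only
    split_ifs with h'
    · have hjM : j < M := by
        rcases Nat.lt_or_ge j M with h1 | h1
        · exact h1
        · exfalso; have : j = M := by omega
          exact hne (by simp [Prod.ext_iff]; omega)
      have hiM : i < M := by omega
      rw [h i hiM, h j hjM]; ring
    · ring

lemma iterate_agree {B C : PowerSeries K} {M : ℕ} (hM : 1 ≤ M)
    (hB : PowerSeries.coeff (R := K) 0 B = 1)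
    (h : ∀ m < M, PowerSeries.coeff (R := K) m B = PowerSeries.coeff (R := K) m C) (j : ℕ) :
    (∀ m < M, PowerSeries.coeff (R := K) m (sigmaForm^[j] B) = PowerSeries.coeff (R := K) m (sigmaForm^[j] C)) ∧
    PowerSeries.coeff (R := K) M (sigmaForm^[j] B) - PowerSeries.coeff (R := K) M (sigmaForm^[j] C)
      = PowerSeries.coeff (R := K) M B - PowerSeries.coeff (R := K) M C := by
  induction j with
  | zero => exact ⟨h, rfl⟩
  | succ j ih =>
    refine ⟨?_, ?_⟩
    · intro m hm
      rw [Function.iterate_succ_apply', Function.iterate_succ_apply']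
      exact coeff_sigmaForm_congr ih.1 hm
    · rw [Function.iterate_succ_apply', Function.iterate_succ_apply',
        coeff_sigmaForm_sub hM ih.1, coeff_zero_iterate B hB j, one_mul, ih.2]

lemma iterate_two_pow (A : PowerSeries (AlgebraicClosure (ZMod 2)))
    (hA : PowerSeries.coeff (R := _) 0 A = 1) (N : ℕ) :
    ∀ m ≤ N, PowerSeries.coeff (R := _) m (sigmaForm^[2 ^ N] A) = PowerSeries.coeff (R := _) m A := by
  induction N with
  | zero =>
    intro m hm
    interval_cases m
    simpa [coeff_zero_sigmaForm, hA] using (coeff_zero_iterate A hA 1)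
  | succ N ih =>
    intro m hm
    have hsplit : sigmaForm^[2 ^ (N + 1)] A = sigmaForm^[2 ^ N] (sigmaForm^[2 ^ N] A) := by
      rw [← Function.iterate_add_apply]
      congr 1
      omega
    set A1 := sigmaForm^[2 ^ N] A with hA1
    have h1 : ∀ m' < N + 1, PowerSeries.coeff (R := _) m' A1 = PowerSeries.coeff (R := _) m' A := by
      intro m' hm'; exact ih m' (by omega)
    have hA1' : PowerSeries.coeff (R := _) 0 A1 = 1 := coeff_zero_iterate A hA _
    have key := iterate_agree (Nat.le_add_left 1 N) hA1' h1 (2 ^ N)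
    rcases Nat.lt_or_ge m (N + 1) with hm' | hm'
    · rw [hsplit, key.1 m hm', h1 m hm']
    · have hmN : m = N + 1 := by omega
      subst hmN
      have h2 : (2 : AlgebraicClosure (ZMod 2)) = 0 := CharTwo.two_eq_zero
      have hd := key.2
      rw [hsplit]
      linear_combination hd + (PowerSeries.coeff (R := _) (N+1) A1 - PowerSeries.coeff (R := _) (N+1) A) * h2

/-- Every finite orbit of `σ` on `1 + X·𝔽̄₂[[X]]` has cardinality a power of `2`. -/
theorem sigmaForm_finite_orbit_card_pow_two (A : PowerSeries (AlgebraicClosure (ZMod 2)))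
    (hA : PowerSeries.coeff (R := AlgebraicClosure (ZMod 2)) 0 A = 1)
    (h : (Set.range fun n : ℕ => sigmaForm^[n] A).Finite) :
    ∃ k : ℕ, h.toFinset.card = 2 ^ k := by
  -- there is N with sigmaForm^[2^N] A = A
  set g : ℕ → h.toFinset := fun N => ⟨sigmaForm^[2 ^ N] A, by
    simp only [Set.Finite.mem_toFinset]; exact ⟨2 ^ N, rfl⟩⟩ with hg
  obtain ⟨y, hy⟩ := Finite.exists_infinite_fiber g
  rw [Set.infinite_coe_iff] at hy
  have hyA : (y : PowerSeries (AlgebraicClosure (ZMod 2))) = A := by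
    ext m
    obtain ⟨N, hN, hNm⟩ := hy.exists_gt m
    have : g N = y := hN
    rw [← this]
    exact iterate_two_pow A hA N m (le_of_lt hNm)
  obtain ⟨N, hN, -⟩ := hy.exists_gt 0
  have hper : Function.IsPeriodicPt sigmaForm (2 ^ N) A := by
    have : g N = y := hN
    have := congrArg Subtype.val this
    simpa [Function.IsPeriodicPt, Function.IsFixedPt, hyA] using this
  have hpos : 0 < Function.minimalPeriod sigmaForm A :=
    hper.minimalPeriod_pos (Nat.pow_pos (n := N) two_pos)
  have hdvd : Function.minimalPeriod sigmaForm A ∣ 2 ^ N := hper.minimalPeriod_dvd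
  obtain ⟨k, -, hk⟩ := (Nat.dvd_prime_pow Nat.prime_two).mp hdvd
  refine ⟨k, ?_⟩
  rw [← hk]
  -- the orbit finset is the image of range minimalPeriod
  set p := Function.minimalPeriod sigmaForm A with hp
  have himg : h.toFinset = Finset.image (fun i => sigmaForm^[i] A) (Finset.range p) := by
    ext B
    simp only [Set.Finite.mem_toFinset, Set.mem_range, Finset.mem_image, Finset.mem_range]
    constructor
    · rintro ⟨n, rfl⟩
      exact ⟨n % p, Nat.mod_lt n hpos, Function.iterate_mod_minimalPeriod_eq⟩
    · rintro ⟨i, -, rfl⟩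
      exact ⟨i, rfl⟩
  rw [himg, Finset.card_image_of_injOn, Finset.card_range]
  intro i hi j hj hij
  simp only [Finset.coe_range, Set.mem_Iio] at hi hj
  exact Function.iterate_injOn_Iio_minimalPeriod hi hj hij
end
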